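/- arXiv:2201.00945 — 5 statements merged into one kernel-verified Lean document; each statement's English description precedes it below -/
import Mathlib

section
/- Let G ∈ ℝ[T] be a polynomial of positive degree, c ∈ ℝ with G(c) ≠ 0, and define P_0 := T, P_{k+1} := P_k' · G. Then for every k ≥ 0 there exists k' ≥ k with P_{k'}(c) ≠ 0. -/
theorem stmt1 (G : Polynomial ℝ) (c : ℝ)
    (hGdeg : 0 < G.degree)
    (hGc : G.eval c ≠ 0)
    (P : ℕ → Polynomial ℝ)
    (hP0 : P 0 = Polynomial.X)
    (hPsucc : ∀ k : ℕ, P (k + 1) = (P k).derivative * G) :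
    ∀ k : ℕ, ∃ k' : ℕ, k ≤ k' ∧ (P k').eval c ≠ 0 := by
  have hG0 : G ≠ 0 := fun h => by simp [h] at hGc
  have hGnat : 0 < G.natDegree := Polynomial.natDegree_pos_iff_degree_pos.2 hGdeg
  -- all P k have positive natDegree
  have hdeg : ∀ k, 0 < (P k).natDegree := by
    intro k
    induction k with
    | zero => simp [hP0]
    | succ k ih =>
      rw [hPsucc k]
      have hd : (P k).derivative ≠ 0 := by
        intro h
        have := (P k).natDegree_eq_zero_of_derivative_eq_zero h
        omega
      rw [Polynomial.natDegree_mul hd hG0]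
      have : (P k).derivative.natDegree = (P k).natDegree - 1 := by
        have := Polynomial.degree_derivative_eq (P k) ih
        exact Polynomial.natDegree_eq_of_degree_eq_some this
      omega
  have hne : ∀ k, P k ≠ 0 := fun k h => by
    have := hdeg k; rw [h] at this; simp at this
  -- root multiplicity of G at c is zero
  have hGm : G.rootMultiplicity c = 0 := Polynomial.rootMultiplicity_eq_zero hGc
  -- multiplicity drops by one each step while positive
  have key : ∀ m k, (P k).rootMultiplicity c = m → (P (k + m)).eval c ≠ 0 := by
    intro m
    induction m with
    | zero =>
      intro k hm h
      have := (Polynomial.rootMultiplicity_pos (hne k)).2 h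
      omega
    | succ m ih =>
      intro k hm
      have hroot : (P k).IsRoot c := by
        apply (Polynomial.rootMultiplicity_pos (hne k)).1
        omega
      have hd : (P k).derivative ≠ 0 := by
        intro h
        have := (P k).natDegree_eq_zero_of_derivative_eq_zero h
        have := hdeg k; omega
      have hmul : (P (k+1)).rootMultiplicity c = m := by
        rw [hPsucc k, Polynomial.rootMultiplicity_mul (mul_ne_zero hd hG0), hGm,
          Polynomial.derivative_rootMultiplicity_of_root hroot, hm]
        omega
      have := ih (k+1) hmul
      convert this using 3
      omega
  intro k
  exact ⟨k + (P k).rootMultiplicity c, Nat.le_add_right _ _, key _ k rfl⟩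
end

section
/- Let g : ℝ → ℝ be a smooth function satisfying the algebro-differential equation g' = G ∘ g for some polynomial G ∈ ℝ[T] of positive degree with G(g(0)) ≠ 0. Then for every p ≥ 1, the function (a, b) ↦ det(g(a_i · b_j))_{1 ≤ i,j ≤ p} on ℝ^p × ℝ^p is not identically zero. -/
open Polynomial

noncomputable def Pseq (G : Polynomial ℝ) : ℕ → Polynomial ℝ
  | 0 => Polynomial.X
  | n + 1 => (Pseq G n).derivative * G

lemma Pseq_deg (G : Polynomial ℝ) (hG : 0 < G.degree) : ∀ n, 0 < (Pseq G n).degree := by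
  intro n
  induction n with
  | zero => simpa [Pseq] using (by norm_num : (0:WithBot ℕ) < 1)
  | succ n ih =>
    have hnd : 0 < (Pseq G n).natDegree := natDegree_pos_iff_degree_pos.mpr ih
    have hder : (Pseq G n).derivative ≠ 0 := fun h =>
      hnd.ne' (natDegree_eq_zero_of_derivative_eq_zero h)
    rw [show Pseq G (n+1) = (Pseq G n).derivative * G from rfl, degree_mul]
    calc (0:WithBot ℕ) < G.degree := hG
      _ ≤ (Pseq G n).derivative.degree + G.degree := by
          nth_rewrite 1 [← zero_add G.degree]
          exact add_le_add_left (zero_le_degree_iff.mpr hder) _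

lemma Pseq_eval_ne (G : Polynomial ℝ) (hG : 0 < G.degree) (u : ℝ) (hGu : G.eval u ≠ 0) :
    ∀ m n : ℕ, rootMultiplicity u (Pseq G n) = m → (Pseq G (n + m)).eval u ≠ 0 := by
  intro m
  induction m with
  | zero =>
    intro n h he
    have hne : Pseq G n ≠ 0 := fun h0 => by simpa [h0] using Pseq_deg G hG n
    exact hne (rootMultiplicity_eq_zero_iff.mp h he)
  | succ m ih =>
    intro n h
    have hne : Pseq G (n+1) ≠ 0 := fun h0 => by simpa [h0] using Pseq_deg G hG (n+1)
    have hroot : (Pseq G n).IsRoot u := by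
      by_contra hr
      rw [rootMultiplicity_eq_zero hr] at h
      exact Nat.succ_ne_zero m h.symm
    have hmul : rootMultiplicity u (Pseq G (n+1)) = m := by
      rw [show Pseq G (n+1) = (Pseq G n).derivative * G from rfl,
        rootMultiplicity_mul (by rwa [show (Pseq G n).derivative * G = Pseq G (n+1) from rfl]),
        derivative_rootMultiplicity_of_root hroot, h,
        rootMultiplicity_eq_zero (fun hr => hGu hr)]
      omega
    have := ih (n+1) hmul
    rwa [show n + 1 + m = n + (m + 1) by omega] at this

lemma Pseq_infinite (G : Polynomial ℝ) (hG : 0 < G.degree) (u : ℝ) (hGu : G.eval u ≠ 0) :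
    {n : ℕ | (Pseq G n).eval u ≠ 0}.Infinite := by
  apply Set.infinite_of_not_bddAbove
  rintro ⟨N, hN⟩
  have h := Pseq_eval_ne G hG u hGu (rootMultiplicity u (Pseq G (N+1))) (N+1) rfl
  have : N + 1 + rootMultiplicity u (Pseq G (N+1)) ≤ N := hN h
  omega

lemma iteratedDeriv_g (g : ℝ → ℝ) (G : Polynomial ℝ) (hg : ContDiff ℝ (⊤ : ℕ∞) g)
    (hderiv : ∀ x : ℝ, deriv g x = G.eval (g x)) :
    ∀ n x, iteratedDeriv n g x = (Pseq G n).eval (g x) := by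
  intro n
  induction n with
  | zero => intro x; simp [Pseq]
  | succ n ih =>
    intro x
    rw [iteratedDeriv_succ, funext ih]
    have hgx : HasDerivAt g (G.eval (g x)) x := by
      have h := ((hg.differentiable (by simp)) x).hasDerivAt
      rwa [hderiv x] at h
    have h2 : HasDerivAt (fun y => (Pseq G n).eval (g y))
        ((Pseq G n).derivative.eval (g x) * G.eval (g x)) x :=
      (Polynomial.hasDerivAt (Pseq G n) (g x)).comp x hgx
    rw [h2.deriv]
    simp [Pseq]

lemma iteratedDeriv_const_mul' {n : ℕ} (c : ℝ) {f : ℝ → ℝ} (hf : ContDiff ℝ n f) (x : ℝ) :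
    iteratedDeriv n (fun z => c * f z) x = c * iteratedDeriv n f x := by
  simp only [← iteratedDerivWithin_univ]
  exact iteratedDerivWithin_const_mul (Set.mem_univ x) uniqueDiffOn_univ c hf.contDiffWithinAt

lemma iteratedDeriv_sum' {ι : Type*} (s : Finset ι) (f : ι → ℝ → ℝ) {n : ℕ}
    (h : ∀ j ∈ s, ContDiff ℝ n (f j)) (x : ℝ) :
    iteratedDeriv n (fun t => ∑ j ∈ s, f j t) x = ∑ j ∈ s, iteratedDeriv n (f j) x := by
  simp only [iteratedDeriv_eq_iteratedFDeriv]
  rw [iteratedFDeriv_sum h]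
  simp

lemma iteratedDeriv_zero_fun' {n : ℕ} (x : ℝ) :
    iteratedDeriv n (fun _ : ℝ => (0:ℝ)) x = 0 := by
  rw [iteratedDeriv_eq_iteratedFDeriv, iteratedFDeriv_zero_fun]
  simp

theorem stmt2 (g : ℝ → ℝ) (G : Polynomial ℝ)
    (hg : ContDiff ℝ (⊤ : ℕ∞) g)
    (hderiv : ∀ x : ℝ, deriv g x = G.eval (g x))
    (hGdeg : 0 < G.degree)
    (hG0 : G.eval (g 0) ≠ 0)
    (p : ℕ) (hp : 1 ≤ p) :
    ∃ a b : Fin p → ℝ,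
      Matrix.det (Matrix.of fun i j : Fin p => g (a i * b j)) ≠ 0 := by
  by_contra hcon
  push_neg at hcon
  have hS := Pseq_infinite G hGdeg (g 0) hG0
  set k : Fin p → ℕ := fun j => ((Set.Infinite.natEmbedding _ hS) (j : ℕ) : ℕ) with hk
  have hk_inj : Function.Injective k := by
    intro j1 j2 h
    exact Fin.val_injective ((Set.Infinite.natEmbedding _ hS).injective (Subtype.ext h))
  have hk_ne : ∀ j, (Pseq G (k j)).eval (g 0) ≠ 0 :=
    fun j => ((Set.Infinite.natEmbedding _ hS) (j : ℕ)).2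
  set a : Fin p → ℝ := fun i => (2 : ℝ) ^ (i : ℕ) with ha
  set v : ℝ → (Fin p → ℝ) := fun t i => g (a i * t) with hv
  by_cases hspan : Submodule.span ℝ (Set.range v) = ⊤
  · obtain ⟨s, hsub, hspan2, hli⟩ := exists_linearIndependent ℝ (Set.range v)
    rw [hspan] at hspan2
    have hfin : s.Finite := hli.setFinite
    have : Fintype s := hfin.fintype
    let B : Module.Basis s ℝ (Fin p → ℝ) := Module.Basis.mk hli (by rw [Subtype.range_coe, hspan2])
    have hcard : Fintype.card s = p := by
      have h1 := Module.finrank_eq_card_basis B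
      have h2 : Module.finrank ℝ (Fin p → ℝ) = p := by simp
      rw [h2] at h1
      exact h1.symm
    let e : Fin p ≃ s := (Fintype.equivFinOfCardEq hcard).symm
    choose b hb using fun j : Fin p => hsub (e j).2
    have hind : LinearIndependent ℝ (fun j : Fin p => v (b j)) := by
      have h1 : LinearIndependent ℝ (fun j : Fin p => ((e j : Fin p → ℝ))) :=
        hli.comp e e.injective
    -- rewrite
      have h2 : (fun j : Fin p => v (b j)) = fun j => (e j : Fin p → ℝ) :=
        funext fun j => hb j
      rw [h2]
      exact h1
    have hcols : LinearIndependent ℝ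
        (fun j : Fin p => Matrix.transpose (Matrix.of fun i j : Fin p => g (a i * b j)) j) := hind
    have hu := Matrix.linearIndependent_cols_iff_isUnit.mp hcols
    have hdet := ((Matrix.isUnit_iff_isUnit_det _).mp hu).ne_zero
    exact hdet (hcon a b)
  · have hlt : Submodule.span ℝ (Set.range v) < ⊤ := lt_top_iff_ne_top.mpr hspan
    obtain ⟨f, hf0, hfmap⟩ :=
      (Submodule.span ℝ (Set.range v)).exists_dual_map_eq_bot_of_lt_top hlt inferInstance
    have hfv : ∀ t : ℝ, f (v t) = 0 := by
      intro t
      have h1 : f (v t) ∈ (Submodule.span ℝ (Set.range v)).map f :=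
        Submodule.mem_map_of_mem (Submodule.subset_span ⟨t, rfl⟩)
      rw [hfmap] at h1
      simpa using h1
    set lam : Fin p → ℝ := fun i => f (fun j => if i = j then 1 else 0) with hlam
    have hfx : ∀ x : Fin p → ℝ, f x = ∑ i, x i * lam i := by
      intro x
      rw [LinearMap.pi_apply_eq_sum_univ f x]
      simp [hlam, smul_eq_mul]
    have hlamne : lam ≠ 0 := by
      intro h0
      apply hf0
      apply LinearMap.ext
      intro x
      rw [hfx x]
      simp [congrFun h0]
    have hψ : (fun t : ℝ => ∑ i, lam i * g (a i * t)) = fun _ => (0:ℝ) := by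
      funext t
      have h1 := hfv t
      rw [hfx (v t)] at h1
      simpa [hv, mul_comm] using h1
    have key : ∀ n : ℕ, (∑ i, lam i * a i ^ n) * (Pseq G n).eval (g 0) = 0 := by
      intro n
      have hcgi : ∀ i : Fin p, ContDiff ℝ (n : ℕ∞) (fun t : ℝ => g (a i * t)) :=
        fun i => (hg.of_le (by exact_mod_cast le_top)).comp (contDiff_const.mul contDiff_id)
      have h1 : iteratedDeriv n (fun t : ℝ => ∑ i, lam i * g (a i * t)) 0
          = ∑ i, lam i * (a i ^ n * iteratedDeriv n g (a i * 0)) := by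
        rw [iteratedDeriv_sum' Finset.univ _
          (fun i _ => contDiff_const.mul (hcgi i))]
        refine Finset.sum_congr rfl fun i _ => ?_
        rw [iteratedDeriv_const_mul' (lam i) (hcgi i)]
        congr 1
        exact congrFun (iteratedDeriv_comp_const_mul (hg.of_le (by exact_mod_cast le_top)) (a i)) 0
      have h0 : iteratedDeriv n (fun t : ℝ => ∑ i, lam i * g (a i * t)) 0 = 0 := by
        rw [hψ]
        exact iteratedDeriv_zero_fun' 0
      rw [h0] at h1
      rw [Finset.sum_mul]
      refine Eq.trans ?_ h1.symm
      refine Finset.sum_congr rfl fun i _ => ?_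
      rw [iteratedDeriv_g g G hg hderiv n, mul_zero]
      ring
    have hsum : ∀ j : Fin p, ∑ i, lam i * ((2:ℝ) ^ (k j)) ^ (i : ℕ) = 0 := by
      intro j
      have h2 := (mul_eq_zero.mp (key (k j))).resolve_right (hk_ne j)
      calc ∑ i, lam i * ((2:ℝ) ^ (k j)) ^ (i : ℕ)
          = ∑ i, lam i * a i ^ (k j) := by
            refine Finset.sum_congr rfl fun i _ => ?_
            rw [ha, ← pow_mul, ← pow_mul, Nat.mul_comm (k j) (i : ℕ)]
        _ = 0 := h2
    have hw : Function.Injective fun j : Fin p => (2:ℝ) ^ (k j) := by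
      intro j1 j2 h
      have hmono : StrictMono fun n : ℕ => (2:ℝ) ^ n := fun m n hmn =>
        pow_lt_pow_right₀ (by norm_num) hmn
      exact hk_inj (hmono.injective h)
    exact hlamne (Matrix.eq_zero_of_forall_index_sum_mul_pow_eq_zero hw hsum)
end

section
/- For every p ≥ 1, the function (a, b) ↦ det(sin(a_i · b_j))_{1 ≤ i,j ≤ p} on ℝ^p × ℝ^p is not identically zero. -/
/-! For `a i = π / 2 ^ (i + 1)` and `b j = 2 ^ j` we get `a i * b j = 2 ^ (j - i - 1) * π` when `i < j`
and `a i * b i = π / 2`, so the matrix is lower triangular with unit diagonal and has determinant `1`. -/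

open Real

lemma sin_pi_div_two_pow_succ_mul_two_pow_of_lt {i j : ℕ} (hij : i < j) :
    sin (π / 2 ^ (i + 1) * 2 ^ j) = 0 := by
  obtain ⟨k, rfl⟩ := Nat.exists_eq_add_of_lt hij
  have h : π / 2 ^ (i + 1) * 2 ^ (i + k + 1) = (2 ^ k : ℕ) * π := by
    push_cast
    field_simp
    ring
  rw [h, sin_nat_mul_pi]

lemma sin_pi_div_two_pow_succ_mul_two_pow (i : ℕ) : sin (π / 2 ^ (i + 1) * 2 ^ i) = 1 := by
  have h : π / 2 ^ (i + 1) * 2 ^ i = π / 2 := by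
    rw [pow_succ]
    field_simp
  rw [h, sin_pi_div_two]

theorem stmt3_general (p : ℕ) :
    ∃ a b : Fin p → ℝ,
      Matrix.det (Matrix.of fun i j : Fin p => Real.sin (a i * b j)) ≠ 0 := by
  refine ⟨fun i => π / 2 ^ ((i : ℕ) + 1), fun j => 2 ^ (j : ℕ), ?_⟩
  have hlower :
      (Matrix.of fun i j : Fin p => sin (π / 2 ^ ((i : ℕ) + 1) * 2 ^ (j : ℕ))).IsLowerTriangular :=
    fun i j hij => sin_pi_div_two_pow_succ_mul_two_pow_of_lt hij
  simp [Matrix.det_of_isLowerTriangular _ hlower, sin_pi_div_two_pow_succ_mul_two_pow]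

theorem stmt3 (p : ℕ) (hp : 1 ≤ p) :
    ∃ a b : Fin p → ℝ,
      Matrix.det (Matrix.of fun i j : Fin p => Real.sin (a i * b j)) ≠ 0 :=
  stmt3_general p
end

section
/- Let N < p and suppose θ : ℝ^N → ℝ^p and π : ℝ^p → ℝ^N are maps with θ ∘ π ∘ θ = θ, θ is differentiable, and π is differentiable at a point y_0 ∈ ℝ^p. Suppose there exist differentiable curves β_1,…,β_p : ℝ → ℝ^N with (θ ∘ β_i)(0) = y_0 for all i, such that the vectors (d/dt)(θ ∘ β_i)(0) ∈ ℝ^p, i = 1,…,p, are linearly independent. Then we obtain a contradiction; i.e., no such π exists. -/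
theorem stmt9 (N p : ℕ) (hNp : N < p)
    (θ : (Fin N → ℝ) → (Fin p → ℝ)) (π : (Fin p → ℝ) → (Fin N → ℝ))
    (y₀ : Fin p → ℝ)
    (hθπθ : θ ∘ π ∘ θ = θ)
    (hθ : Differentiable ℝ θ)
    (hπ : DifferentiableAt ℝ π y₀)
    (β : Fin p → ℝ → (Fin N → ℝ))
    (hβ : ∀ i, Differentiable ℝ (β i))
    (hβ0 : ∀ i, (θ ∘ β i) 0 = y₀)
    (hli : LinearIndependent ℝ (fun i : Fin p => deriv (θ ∘ β i) 0)) :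
    False := by
  set L : (Fin N → ℝ) →ₗ[ℝ] (Fin p → ℝ) := (fderiv ℝ θ (π y₀) : (Fin N → ℝ) →L[ℝ] (Fin p → ℝ)).toLinearMap with hLdef
  have key : ∀ i, deriv (θ ∘ β i) 0 ∈ LinearMap.range L := by
    intro i
    have hθβ : DifferentiableAt ℝ (θ ∘ β i) 0 :=
      (hθ _).comp 0 (hβ i 0)
    have hπ' : DifferentiableAt ℝ π ((θ ∘ β i) 0) := by rw [hβ0 i]; exact hπ
    have hg : DifferentiableAt ℝ (π ∘ θ ∘ β i) 0 := hπ'.comp 0 hθβ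
    have hg0 : (π ∘ (θ ∘ β i)) 0 = π y₀ := congrArg π (hβ0 i)
    have hfθ : HasFDerivAt θ (fderiv ℝ θ (π y₀)) ((π ∘ (θ ∘ β i)) 0) := by
      rw [hg0]; exact (hθ _).hasFDerivAt
    have hcomp : HasDerivAt (θ ∘ (π ∘ (θ ∘ β i))) (fderiv ℝ θ (π y₀) (deriv (π ∘ θ ∘ β i) 0)) 0 :=
      hfθ.comp_hasDerivAt 0 hg.hasDerivAt
    have heq : θ ∘ (π ∘ (θ ∘ β i)) = θ ∘ β i := by
      rw [show θ ∘ (π ∘ (θ ∘ β i)) = (θ ∘ π ∘ θ) ∘ β i from rfl, hθπθ]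
    rw [heq] at hcomp
    exact ⟨_, hcomp.deriv.symm⟩
  have h2 : LinearIndependent ℝ
      (fun i : Fin p => (⟨deriv (θ ∘ β i) 0, key i⟩ : LinearMap.range L)) :=
    hli.of_comp (LinearMap.range L).subtype
  have hcard := h2.fintype_card_le_finrank
  have hrank : Module.finrank ℝ ↥(LinearMap.range L) ≤ N := by
    calc Module.finrank ℝ ↥(LinearMap.range L) ≤ Module.finrank ℝ (Fin N → ℝ) :=
          LinearMap.finrank_range_le L
      _ = N := by simp
  simp [Fintype.card_fin] at hcard
  omega
end

section
/- Let f, g_1, …, g_m : ℝ → ℝ be continuously differentiable with f'(0) ≠ 0, and suppose there exist ρ_1,…,ρ_p, γ_1,…,γ_p ∈ ℝ^n with γ_1,…,γ_p distinct and det(g_1(ρ_i · γ_j))_{1≤i,j≤p} ≠ 0. Define the three-layer network output o_{v,s,w,t}(x) = f(s + ∑_{k=1}^m v_k g_k(t_k + ∑_{l=1}^n w_l^k x_l)) with parameter space ℝ^{m(n+2)+1}. If p > m(n+2)+1, then there is no continuously differentiable map Π : U_p → ℝ^{m(n+2)+1} (where U_p is the set of training data ((γ_1,ζ_1),…,(γ_p,ζ_p))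 ∈ ℝ^{p(n+1)} with distinct γ_i) such that for every training data set for which the quadratic error E(v,s,w,t) = ∑_{i=1}^p (ζ_i − o_{v,s,w,t}(γ_i))² attains a global minimum, Π returns a global minimizer. -/
/-- Parameter space of a three-layer network: weights `v`, threshold `s`,
weight matrix `w`, thresholds `t`; in total `m*(n+2)+1` real parameters. -/
abbrev NNParams (m n : ℕ) :=
  (Fin m → ℝ) × ℝ × (Fin m → Fin n → ℝ) × (Fin m → ℝ)

/-- Output of the three-layer network `o_{v,s,w,t}(x) = f(s + ∑ v_k g_k(t_k + ∑ w_l^k x_l))`. -/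
def netOutput (m n : ℕ) (f : ℝ → ℝ) (g : Fin m → ℝ → ℝ)
    (q : NNParams m n) (x : Fin n → ℝ) : ℝ :=
  f (q.2.1 + ∑ k, q.1 k * g k (q.2.2.2 k + ∑ l, q.2.2.1 k l * x l))

/-- Quadratic error of parameters `q` on the training data `d`. -/
def netErr (m n p : ℕ) (f : ℝ → ℝ) (g : Fin m → ℝ → ℝ)
    (d : Fin p → (Fin n → ℝ) × ℝ) (q : NNParams m n) : ℝ :=
  ∑ i, ((d i).2 - netOutput m n f g q (d i).1) ^ 2

/-!
Feed `Spec` the training sets `(γ_j, f (r * M i j))_j`, where `M i j = g₀ (ρ i ⬝ γ j)`: each is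
fitted exactly by a single hidden neuron, so the network output at the `γ_j` of the parameters
chosen by `Spec` reproduces the targets. Differentiating at `r = 0`, the `p` rows of
`f'(0) • M`, which are independent since `det M ≠ 0`, lie in the range of the derivative of a
map defined on the `m (n + 2) + 1`-dimensional parameter space; hence `p ≤ m (n + 2) + 1`.
-/

open Module

theorem isOpen_setOf_injective {ι Y : Type*} [Finite ι] [TopologicalSpace Y] [T2Space Y] :
    IsOpen {x : ι → Y | Function.Injective x} := by
  have : {x : ι → Y | Function.Injective x} = ⋂ (i) (j) (_ : i ≠ j), {x | x i ≠ x j} := by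
    ext x
    simp only [Set.mem_ofPred_eq, Set.mem_iInter, Function.Injective]
    exact forall₂_congr fun i j => not_imp_not.symm
  rw [this]
  exact isOpen_iInter_of_finite fun i => isOpen_iInter_of_finite fun j =>
    isOpen_iInter_of_finite fun _ => isOpen_ne_fun (continuous_apply i) (continuous_apply j)

/-- The velocities of the curves `e ∘ σ i` through `e x` lie in the range of `fderiv ℝ e x`. -/
theorem LinearIndependent.card_le_finrank_of_deriv_comp {ι E P : Type*} [Fintype ι]
    [NormedAddCommGroup E] [NormedSpace ℝ E] [NormedAddCommGroup P] [NormedSpace ℝ P]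
    [FiniteDimensional ℝ P] {e : P → E} {σ : ι → ℝ → P} {x : P}
    (he : DifferentiableAt ℝ e x) (hσ : ∀ i, DifferentiableAt ℝ (σ i) 0)
    (hσx : ∀ i, σ i 0 = x)
    (hli : LinearIndependent ℝ fun i => deriv (e ∘ σ i) 0) :
    Fintype.card ι ≤ finrank ℝ P := by
  have hchain : ∀ i, deriv (e ∘ σ i) 0 = fderiv ℝ e x (deriv (σ i) 0) := fun i => by
    rw [← hσx i]
    exact fderiv_comp_deriv 0 (hσx i ▸ he) (hσ i)
  simp only [hchain] at hli
  exact (hli.of_comp (fderiv ℝ e x : P →ₗ[ℝ] E)).fintype_card_le_finrank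

theorem hasDerivAt_pi_comp_mul {ι : Type*} [Fintype ι] {f : ℝ → ℝ}
    (hf : DifferentiableAt ℝ f 0) (a : ι → ℝ) :
    HasDerivAt (fun r j => f (r * a j)) (deriv f 0 • a) 0 :=
  hasDerivAt_pi.2 fun j =>
    hf.hasDerivAt.comp_of_eq 0 (hasDerivAt_mul_const (a j)) (zero_mul _).symm

theorem finrank_nnParams (m n : ℕ) : finrank ℝ (NNParams m n) = m * (n + 2) + 1 := by
  simp only [NNParams, finrank_prod, finrank_fintype_fun_eq_card,
    Fintype.card_fin, finrank_self, finrank_pi_fintype, Finset.sum_const,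
    Finset.card_univ, smul_eq_mul]
  ring

section Network

variable {m n p : ℕ} {f : ℝ → ℝ} {g : Fin m → ℝ → ℝ}

theorem differentiable_netOutput (hf : Differentiable ℝ f) (hg : ∀ k, Differentiable ℝ (g k))
    (x : Fin n → ℝ) : Differentiable ℝ fun q : NNParams m n => netOutput m n f g q x := by
  unfold netOutput
  fun_prop

theorem netOutput_single (k : Fin m) (r : ℝ) (a x : Fin n → ℝ) :
    netOutput m n f g (Pi.single k r, 0, Pi.single k a, 0) x = f (r * g k (∑ l, a l * x l)) := by
  unfold netOutput
  rw [Finset.sum_eq_single k (fun k' _ hk' => by simp [hk']) (by simp)]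
  simp

theorem netErr_nonneg (d : Fin p → (Fin n → ℝ) × ℝ) (q : NNParams m n) :
    0 ≤ netErr m n p f g d q :=
  Finset.sum_nonneg fun _ _ => sq_nonneg _

theorem netErr_eq_zero_iff {d : Fin p → (Fin n → ℝ) × ℝ} {q : NNParams m n} :
    netErr m n p f g d q = 0 ↔ ∀ i, netOutput m n f g q (d i).1 = (d i).2 := by
  simp only [netErr, Finset.sum_eq_zero_iff_of_nonneg fun _ _ => sq_nonneg _, Finset.mem_univ,
    true_imp_iff, pow_eq_zero_iff two_ne_zero, sub_eq_zero, eq_comm]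

/-- Data that some network fits exactly is fitted exactly by every global minimizer. -/
theorem netOutput_eq_of_forall_netErr_le {d : Fin p → (Fin n → ℝ) × ℝ} {q q' : NNParams m n}
    (hq : ∀ i, netOutput m n f g q (d i).1 = (d i).2)
    (hq' : (∃ q₀ : NNParams m n, ∀ q'', netErr m n p f g d q₀ ≤ netErr m n p f g d q'') →
      ∀ q'', netErr m n p f g d q' ≤ netErr m n p f g d q'') (i : Fin p) :
    netOutput m n f g q' (d i).1 = (d i).2 := by
  have hq0 : netErr m n p f g d q = 0 := netErr_eq_zero_iff.2 hq
  have hmin := hq' ⟨q, fun q'' => hq0 ▸ netErr_nonneg d q''⟩ q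
  exact netErr_eq_zero_iff.1 (le_antisymm (hq0 ▸ hmin) (netErr_nonneg d q')) i

end Network

theorem stmt10 (m n p : ℕ) (hm : 0 < m)
    (f : ℝ → ℝ) (g : Fin m → ℝ → ℝ)
    (hf : ContDiff ℝ 1 f) (hg : ∀ k, ContDiff ℝ 1 (g k))
    (hf0 : deriv f 0 ≠ 0)
    (hdet : ∃ ρ γ : Fin p → (Fin n → ℝ), Function.Injective γ ∧
      Matrix.det (Matrix.of fun i j : Fin p =>
        g ⟨0, hm⟩ (∑ l, ρ i l * γ j l)) ≠ 0)
    (hp : p > m * (n + 2) + 1) :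
    ¬ ∃ Spec : (Fin p → (Fin n → ℝ) × ℝ) → NNParams m n,
      ContDiffOn ℝ 1 Spec {d | Function.Injective fun i => (d i).1} ∧
      ∀ d : Fin p → (Fin n → ℝ) × ℝ, (Function.Injective fun i => (d i).1) →
        (∃ q : NNParams m n, ∀ q' : NNParams m n,
            netErr m n p f g d q ≤ netErr m n p f g d q') →
        ∀ q' : NNParams m n, netErr m n p f g d (Spec d) ≤ netErr m n p f g d q' := by
  rintro ⟨Spec, hSpec, hmin⟩
  obtain ⟨ρ, γ, hγ, hdet⟩ := hdet
  set M : Matrix (Fin p) (Fin p) ℝ := Matrix.of fun i j => g ⟨0, hm⟩ (∑ l, ρ i l * γ j l)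
  have hf' := hf.differentiable one_ne_zero
  let data (ζ : Fin p → ℝ) (i : Fin p) : (Fin n → ℝ) × ℝ := (γ i, ζ i)
  let curve (i : Fin p) (r : ℝ) (j : Fin p) : ℝ := f (r * M i j)
  let eval (q : NNParams m n) (j : Fin p) : ℝ := netOutput m n f g q (γ j)
  -- `data (curve i r)` is fitted exactly by the single neuron with output weight `r`
  -- and input weights `ρ i`, hence also by `Spec`.
  have hfit : ∀ i, eval ∘ (Spec ∘ data ∘ curve i) = curve i := fun i => by
    funext r j
    exact netOutput_eq_of_forall_netErr_le
      (q := (Pi.single ⟨0, hm⟩ r, 0, Pi.single ⟨0, hm⟩ (ρ i), 0))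
      (fun _ => netOutput_single _ _ _ _) (hmin _ hγ) j
  have hcurve : ∀ i, HasDerivAt (curve i) ((deriv f 0 • M) i) 0 := fun i =>
    hasDerivAt_pi_comp_mul (hf' 0) (M i)
  have hSpec_diff : ∀ ζ, DifferentiableAt ℝ Spec (data ζ) := fun ζ =>
    (hSpec.differentiableOn one_ne_zero).differentiableAt <|
      (isOpen_setOf_injective.preimage (by fun_prop)).mem_nhds hγ
  have hdata : Differentiable ℝ data := by fun_prop
  have heval : Differentiable ℝ eval := differentiable_pi.2 fun j =>
    differentiable_netOutput hf' (fun k => (hg k).differentiable one_ne_zero) (γ j)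
  have hrows : LinearIndependent ℝ fun i => (deriv f 0 • M) i :=
    Matrix.linearIndependent_rows_of_det_ne_zero (by simp [hf0, hdet])
  have hle := LinearIndependent.card_le_finrank_of_deriv_comp
    (σ := fun i => Spec ∘ data ∘ curve i) (x := Spec (data fun _ => f 0)) (heval _)
    (fun i => (hSpec_diff (curve i 0)).comp 0
      ((hdata (curve i 0)).comp 0 (hcurve i).differentiableAt))
    (fun i => by simp [curve]) (by simpa only [hfit, (hcurve _).deriv] using hrows)
  rw [Fintype.card_fin, finrank_nnParams] at hle
  omega
end
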